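/- Let kp, γp > 0, let (μ*, σ*²) satisfy 0 < μ* < σ*² < (1 + kp/γp)·μ*, set δ = μ* − σ*², and let k1, …, k8 ∈ ℝ. Then the 7×7 matrix A*ℓ with rows r1 = (γp + kp·μ*/δ, −k1 + γp·k5·μ*/kp, 0, 0, −k3 + γp·k7·μ*/kp, k2 − γp·k6·μ*/kp, k4 − γp·k8·μ*/kp), r2 = (kp, −γp, 0, 0, 0, 0, 0), r3 = (−γp − kp·μ*/δ, −k1 + γp·k5·μ*/kp, 2γp + 2kp·μ*/δ, 0, −k3 + γp·k7·μ*/kp, k2 − γp·k6·μ*/kp, k4 − γp·k8·μ*/kp), r4 = (0, −k5·γp·δ/kp, kp, kp·μ*/δ, −γp·k7·δ/kp, γp·k6·δ/kp, γp·k8·δ/kp), r5 = (kp, γp, 0, 2kp, −2γp, 0, 0), r6 = (0, −1, 0, 0, 0, 0, 0), r7 = (0, 0, 0, 0, −1, 0, 0) has determinant det(A*ℓ) = 4·γp·kp·(k2·k8 − k4·k6)·(μ*(kp + γp) − γp·σ*²). Consequently A*ℓ is nonsingular if and only if k2·k8 − k4·k6 ≠ 0. -/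

import Mathlib

/-- Jacobian matrix of the closed-loop mean-and-variance control system for the
gene expression network, evaluated at the equilibrium corresponding to the
reference pair `(μ, σ2)`, with `δ = μ - σ2`. -/
noncomputable def Aell (kp γp μ σ2 k1 k2 k3 k4 k5 k6 k7 k8 : ℝ) : Matrix (Fin 7) (Fin 7) ℝ :=
  !![γp + kp * μ / (μ - σ2), -k1 + γp * k5 * μ / kp, 0, 0,
       -k3 + γp * k7 * μ / kp, k2 - γp * k6 * μ / kp, k4 - γp * k8 * μ / kp;
     kp, -γp, 0, 0, 0, 0, 0;
     -γp - kp * μ / (μ - σ2), -k1 + γp * k5 * μ / kp, 2 * γp + 2 * (kp * μ / (μ - σ2)), 0,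
       -k3 + γp * k7 * μ / kp, k2 - γp * k6 * μ / kp, k4 - γp * k8 * μ / kp;
     0, -k5 * (γp * (μ - σ2) / kp), kp, kp * μ / (μ - σ2),
       -γp * k7 * (μ - σ2) / kp, γp * k6 * (μ - σ2) / kp, γp * k8 * (μ - σ2) / kp;
     kp, γp, 0, 2 * kp, -2 * γp, 0, 0;
     0, -1, 0, 0, 0, 0, 0;
     0, 0, 0, 0, -1, 0, 0]

/-- Rows 2, 5, 6, 7 are supported on columns 1, 2, 4, 5, so the matrix is block triangular up to
permuting rows and columns; the complementary block is the `3 × 3` minor on rows 1, 3, 4 and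
columns 3, 6, 7. -/
theorem Matrix.det_fin_seven_of_sparse {R : Type*} [CommRing R]
    (a1 a2 a5 a6 a7 b1 b2 c1 c2 c3 c5 c6 c7 d2 d3 d4 d5 d6 d7 e1 e2 e4 e5 : R) :
    (!![a1, a2, 0, 0, a5, a6, a7;
        b1, b2, 0, 0, 0, 0, 0;
        c1, c2, c3, 0, c5, c6, c7;
        0, d2, d3, d4, d5, d6, d7;
        e1, e2, 0, e4, e5, 0, 0;
        0, -1, 0, 0, 0, 0, 0;
        0, 0, 0, 0, -1, 0, 0] : Matrix (Fin 7) (Fin 7) R).det =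
      -(b1 * e4 * !![0, a6, a7; c3, c6, c7; d3, d6, d7].det) := by
  simp [Matrix.det_succ_row_zero, Fin.sum_univ_succ, Fin.succAbove]
  ring

theorem stmt11_general (kp γp μ σ2 k1 k2 k3 k4 k5 k6 k7 k8 : ℝ)
    (hkp : 0 < kp) (hγp : 0 < γp)
    (h1 : μ < σ2) (h2 : σ2 < (1 + kp / γp) * μ) :
    (Aell kp γp μ σ2 k1 k2 k3 k4 k5 k6 k7 k8).det =
      4 * γp * kp * (k2 * k8 - k4 * k6) * (μ * (kp + γp) - γp * σ2) ∧
    ((Aell kp γp μ σ2 k1 k2 k3 k4 k5 k6 k7 k8).det ≠ 0 ↔ k2 * k8 - k4 * k6 ≠ 0) := by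
  have hδ : μ - σ2 ≠ 0 := (sub_neg.mpr h1).ne
  have hfactor : 0 < μ * (kp + γp) - γp * σ2 := by
    have := (mul_lt_mul_iff_right₀ hγp).mpr h2
    rw [add_mul, one_mul, mul_add, div_mul_eq_mul_div, mul_div_cancel₀ _ hγp.ne'] at this
    linarith
  have hdet : (Aell kp γp μ σ2 k1 k2 k3 k4 k5 k6 k7 k8).det =
      4 * γp * kp * (k2 * k8 - k4 * k6) * (μ * (kp + γp) - γp * σ2) := by
    rw [Aell, Matrix.det_fin_seven_of_sparse, Matrix.det_fin_three]
    simp only [Matrix.of_apply, Matrix.cons_val', Matrix.cons_val, Matrix.empty_val',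
      Matrix.cons_val_fin_one]
    field_simp
    ring
  refine ⟨hdet, ?_⟩
  simp [hdet, hkp.ne', hγp.ne', hfactor.ne']

theorem stmt11 (kp γp μ σ2 k1 k2 k3 k4 k5 k6 k7 k8 : ℝ)
    (hkp : 0 < kp) (hγp : 0 < γp) (hμ : 0 < μ)
    (h1 : μ < σ2) (h2 : σ2 < (1 + kp / γp) * μ) :
    (Aell kp γp μ σ2 k1 k2 k3 k4 k5 k6 k7 k8).det =
      4 * γp * kp * (k2 * k8 - k4 * k6) * (μ * (kp + γp) - γp * σ2) ∧
    ((Aell kp γp μ σ2 k1 k2 k3 k4 k5 k6 k7 k8).det ≠ 0 ↔ k2 * k8 - k4 * k6 ≠ 0) :=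
  stmt11_general kp γp μ σ2 k1 k2 k3 k4 k5 k6 k7 k8 hkp hγp h1 h2
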